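/- For every x ∈ ℓ¹ and every k ≥ 0, the image of the stick-breaking path under the truncation π_k equals the stick-breaking path of the truncation: π_k([[0,x]]_sp) = [[0, π_k(x)]]_sp. -/

import Mathlib

/-- `ℓ¹`, the Banach space of absolutely summable real sequences. -/
noncomputable abbrev Ell1 : Type := lp (fun _ : ℕ => ℝ) 1

/-- Coordinate truncation keeping the first `m` coordinates. -/
noncomputable def trunc (m : ℕ) (x : Ell1) : Ell1 :=
  ⟨fun i => if i < m then x i else 0, by
    refine Memℓp.of_exponent_ge (memℓp_zero ?_) (by simp)
    refine Set.Finite.subset (Set.finite_Iio m) ?_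
    intro i hi
    simp only [Set.mem_setOf_eq] at hi
    by_contra h
    simp only [Set.mem_Iio, not_lt] at h
    exact hi (if_neg (not_lt.mpr h))⟩

lemma trunc_apply (m : ℕ) (x : Ell1) (i : ℕ) : (trunc m x : ∀ _ : ℕ, ℝ) i = if i < m then x i else 0 := rfl

lemma trunc_trunc (k m : ℕ) (x : Ell1) : trunc k (trunc m x) = trunc (min k m) x := by
  apply lp.ext
  funext i
  simp only [trunc_apply, lt_min_iff]
  by_cases h1 : i < k <;> by_cases h2 : i < m <;> simp [h1, h2]

lemma trunc_comb (k : ℕ) (s : ℝ) (u v : Ell1) :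
    trunc k ((1 - s) • u + s • v) = (1 - s) • trunc k u + s • trunc k v := by
  apply lp.ext
  funext i
  simp only [trunc_apply, lp.coeFn_add, lp.coeFn_smul, Pi.add_apply, Pi.smul_apply, smul_eq_mul]
  by_cases h : i < k <;> simp [h]

lemma trunc_sub (k : ℕ) (u v : Ell1) : trunc k (u - v) = trunc k u - trunc k v := by
  apply lp.ext
  funext i
  simp only [trunc_apply, lp.coeFn_sub, Pi.sub_apply]
  by_cases h : i < k <;> simp [h]

lemma norm_trunc_le (k : ℕ) (z : Ell1) : ‖trunc k z‖ ≤ ‖z‖ := by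
  have hp : (0:ℝ) < (1 : ENNReal).toReal := by norm_num
  rw [lp.norm_eq_tsum_rpow hp, lp.norm_eq_tsum_rpow hp]
  simp only [ENNReal.toReal_one, Real.rpow_one, one_div_one]
  have hz : Summable fun i => ‖(z : ∀ _ : ℕ, ℝ) i‖ := by
    simpa using (lp.memℓp z).summable hp
  have hle : ∀ i, ‖(trunc k z : ∀ _ : ℕ, ℝ) i‖ ≤ ‖(z : ∀ _ : ℕ, ℝ) i‖ := by
    intro i
    rw [trunc_apply]
    by_cases h : i < k <;> simp [h]
  exact Summable.tsum_le_tsum hle (Summable.of_nonneg_of_le (fun i => norm_nonneg _) hle hz) hz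

lemma continuous_trunc (k : ℕ) : Continuous (trunc k) := by
  refine LipschitzWith.continuous (K := 1) ?_
  intro u v
  rw [edist_dist, edist_dist, dist_eq_norm, dist_eq_norm, ← trunc_sub]
  simpa using ENNReal.ofReal_le_ofReal (norm_trunc_le k (u - v))

/-- The open stick-breaking path `[[0,x]]°_sp`. -/
def stickCore (x : Ell1) : Set Ell1 :=
  ⋃ m : ℕ, {y | ∃ s ∈ Set.Icc (0 : ℝ) 1, y = (1 - s) • trunc m x + s • trunc (m + 1) x}

/-- The stick-breaking path `[[0,x]]_sp`, the closure of `[[0,x]]°_sp` in `ℓ¹`. -/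
noncomputable def stickPath (x : Ell1) : Set Ell1 :=
  closure (stickCore x)

lemma trunc_mem_stickCore (m : ℕ) (x : Ell1) : trunc m x ∈ stickCore x := by
  refine Set.mem_iUnion.2 ⟨m, ⟨0, ⟨le_refl _, zero_le_one⟩, ?_⟩⟩
  simp

lemma trunc_of_le (k m : ℕ) (h : k ≤ m) (x : Ell1) : trunc m (trunc k x) = trunc k x := by
  rw [trunc_trunc, min_eq_right h]

lemma core_image (x : Ell1) (k : ℕ) : trunc k '' stickCore x = stickCore (trunc k x) := by
  ext y
  constructor
  · rintro ⟨z, hz, rfl⟩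
    obtain ⟨m, s, hs, rfl⟩ := Set.mem_iUnion.1 hz
    rw [trunc_comb, trunc_trunc, trunc_trunc]
    rcases lt_or_ge m k with hm | hm
    · refine Set.mem_iUnion.2 ⟨m, ⟨s, hs, ?_⟩⟩
      rw [min_eq_right hm.le, min_eq_right hm,
        trunc_trunc, trunc_trunc, min_eq_left hm.le, min_eq_left hm]
    · rw [min_eq_left (le_trans hm (Nat.le_succ m)), min_eq_left hm]
      have : (1 - s) • trunc k x + s • trunc k x = trunc k x := by
        rw [← add_smul]; simp
      rw [this]
      have := trunc_mem_stickCore k (trunc k x)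
      rwa [trunc_of_le k k le_rfl] at this
  · intro hy
    obtain ⟨m, s, hs, rfl⟩ := Set.mem_iUnion.1 hy
    rcases lt_or_ge m k with hm | hm
    · refine ⟨(1 - s) • trunc m x + s • trunc (m + 1) x, Set.mem_iUnion.2 ⟨m, ⟨s, hs, rfl⟩⟩, ?_⟩
      rw [trunc_comb, trunc_trunc, trunc_trunc, min_eq_right hm.le, min_eq_right hm,
        trunc_trunc, trunc_trunc, min_eq_left hm.le, min_eq_left hm]
    · refine ⟨trunc k x, trunc_mem_stickCore k x, ?_⟩
      rw [trunc_of_le k m hm, trunc_of_le k (m+1) (le_trans hm (Nat.le_succ m)),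
        ← add_smul]
      simp [trunc_of_le k k le_rfl]

lemma isCompact_piece (a b : Ell1) :
    IsCompact {y : Ell1 | ∃ s ∈ Set.Icc (0 : ℝ) 1, y = (1 - s) • a + s • b} := by
  have : {y : Ell1 | ∃ s ∈ Set.Icc (0 : ℝ) 1, y = (1 - s) • a + s • b}
      = (fun s : ℝ => (1 - s) • a + s • b) '' Set.Icc 0 1 := by
    ext y; constructor
    · rintro ⟨s, hs, rfl⟩; exact ⟨s, hs, rfl⟩
    · rintro ⟨s, hs, rfl⟩; exact ⟨s, hs, rfl⟩
  rw [this]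
  exact isCompact_Icc.image (by fun_prop)

set_option synthInstance.maxHeartbeats 1000000 in
lemma isClosed_stickCore_trunc (x : Ell1) (k : ℕ) : IsClosed (stickCore (trunc k x)) := by
  have heq : stickCore (trunc k x) = ⋃ m ∈ Finset.range (k + 1),
      {y : Ell1 | ∃ s ∈ Set.Icc (0 : ℝ) 1,
        y = (1 - s) • trunc m (trunc k x) + s • trunc (m + 1) (trunc k x)} := by
    ext y
    simp only [stickCore, Set.mem_iUnion, Finset.mem_range]
    constructor
    · rintro ⟨m, s, hs, rfl⟩
      rcases lt_or_ge m k with hm | hm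
      · exact ⟨m, by omega, s, hs, rfl⟩
      · refine ⟨k, by omega, s, hs, ?_⟩
        rw [trunc_of_le k m hm, trunc_of_le k (m+1) (by omega),
          trunc_of_le k k le_rfl, trunc_of_le k (k+1) (by omega)]
    · rintro ⟨m, _, s, hs, rfl⟩
      exact ⟨m, s, hs, rfl⟩
  rw [heq]
  refine (Set.Finite.isCompact_biUnion (Finset.finite_toSet _) ?_).isClosed
  intro m _
  exact isCompact_piece _ _

/-- the image of the stick-breaking path under the truncation `π_k` equals the
stick-breaking path of the truncation. -/
theorem trunc_image_stickPath (x : Ell1) (k : ℕ) :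
    trunc k '' stickPath x = stickPath (trunc k x) := by
  have hclosed := isClosed_stickCore_trunc x k
  have hpath : stickPath (trunc k x) = stickCore (trunc k x) := hclosed.closure_eq
  apply Set.Subset.antisymm
  · intro y hy
    rw [hpath]
    obtain ⟨z, hz, rfl⟩ := hy
    have : trunc k z ∈ closure (trunc k '' stickCore x) :=
      (image_closure_subset_closure_image (continuous_trunc k)) ⟨z, hz, rfl⟩
    rwa [core_image, hclosed.closure_eq] at this
  · rw [hpath, ← core_image]
    exact Set.image_mono subset_closure
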